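/- For all real z > 0 and real w, (1/√π) ∫_ℝ exp(-t²) T(t·z, w) dt = (z/(4√(2π))) ∫_ℝ exp(-t²z²/2) erf(t) erf(t·z·w/√2) dt, where T is Owen's T function. -/

import Mathlib

/-!
After Fubini in `(t, s) ∈ ℝ × [0, w]`, both sides become integrals over `s ∈ [0, w]`. On the
left, `T(tz, w)` is already an `s`-integral and the remaining `t`-integral is Gaussian. On the
right, `erf (tzw/√2)` becomes an `s`-integral after the substitution `u = tzs/√2`, and with
`a = z²(1 + s²)/2` the inner integral `∫ t e^{-at²} erf t dt = 1 / (a √(a + 1))` follows by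
integrating by parts against `erf' t = (2/√π) e^{-t²}`. The two `s`-integrands then agree.
-/

open Real MeasureTheory

noncomputable def erf (x : ℝ) : ℝ := 2 / Real.sqrt π * ∫ s in (0:ℝ)..x, Real.exp (-s^2)

noncomputable def owenT (h k : ℝ) : ℝ :=
  (1 / (2 * π)) * ∫ s in (0:ℝ)..k, (1 / (1 + s^2)) * Real.exp (-h^2 * (1 + s^2) / 2)

open Function Set

lemma hasDerivAt_erf (x : ℝ) : HasDerivAt erf (2 / √π * exp (-x ^ 2)) x := by
  have hc : Continuous fun s : ℝ ↦ exp (-s ^ 2) := by fun_prop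
  exact (intervalIntegral.integral_hasDerivAt_right (hc.intervalIntegrable 0 x)
    (hc.stronglyMeasurableAtFilter _ _) hc.continuousAt).const_mul _

@[fun_prop]
lemma continuous_erf : Continuous erf :=
  continuous_iff_continuousAt.2 fun x ↦ (hasDerivAt_erf x).continuousAt

lemma erf_neg (x : ℝ) : erf (-x) = -erf x := by
  have h := intervalIntegral.integral_comp_neg (a := 0) (b := x) fun s : ℝ ↦ exp (-s ^ 2)
  simp only [neg_sq, neg_zero] at h
  rw [erf, erf, intervalIntegral.integral_symm, ← h, mul_neg]

lemma erf_nonneg {x : ℝ} (hx : 0 ≤ x) : 0 ≤ erf x := by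
  unfold erf
  have : 0 ≤ ∫ s in (0:ℝ)..x, exp (-s ^ 2) :=
    intervalIntegral.integral_nonneg hx fun s _ ↦ (exp_pos _).le
  positivity

lemma erf_le_one (x : ℝ) : erf x ≤ 1 := by
  rcases le_total 0 x with hx | hx
  · have hhalf : ∫ s in (0:ℝ)..x, exp (-s ^ 2) ≤ √π / 2 := by
      have h := integral_gaussian_Ioi 1
      simp only [neg_one_mul, div_one] at h
      rw [intervalIntegral.integral_of_le hx, ← h]
      exact setIntegral_mono_set (integrableOn_Ioi_exp_neg_mul_sq_iff.2 one_pos |>.congr_fun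
        (fun s _ ↦ by simp) measurableSet_Ioi) (Filter.Eventually.of_forall fun s ↦ (exp_pos _).le)
        Ioc_subset_Ioi_self.eventuallyLE
    have : 0 < √π := sqrt_pos.2 pi_pos
    calc erf x ≤ 2 / √π * (√π / 2) := by unfold erf; gcongr
      _ = 1 := by field_simp
  · linarith [erf_nonneg (neg_nonneg.2 hx), erf_neg x]

lemma abs_erf_le_one (x : ℝ) : |erf x| ≤ 1 :=
  abs_le.2 ⟨by linarith [erf_le_one (-x), erf_neg x], erf_le_one x⟩

lemma erf_mul (c x : ℝ) : erf (c * x) = 2 / √π * c * ∫ s in (0:ℝ)..x, exp (-(c * s) ^ 2) := by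
  have h := intervalIntegral.smul_integral_comp_mul_left (a := 0) (b := x)
    (fun u : ℝ ↦ exp (-u ^ 2)) c
  rw [smul_eq_mul, mul_zero] at h
  rw [erf, ← h, mul_assoc]

lemma integral_mul_exp_neg_mul_sq_mul_erf {a : ℝ} (ha : 0 < a) :
    ∫ t, t * exp (-a * t ^ 2) * erf t = 1 / (a * √(a + 1)) := by
  have hbdd : ∀ᵐ t : ℝ, ‖erf t‖ ≤ 1 := Filter.Eventually.of_forall abs_erf_le_one
  have hg : Integrable fun t ↦ t * exp (-a * t ^ 2) * erf t :=
    (integrable_mul_exp_neg_mul_sq ha).mul_bdd (by fun_prop) hbdd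
  have hh : Integrable fun t ↦ 1 / (a * √π) * exp (-(a + 1) * t ^ 2) :=
    (integrable_exp_neg_mul_sq (by linarith)).const_mul _
  have hF : Integrable fun t ↦ -(1 / (2 * a)) * (exp (-a * t ^ 2) * erf t) :=
    ((integrable_exp_neg_mul_sq ha).mul_bdd (by fun_prop) hbdd).const_mul _
  have hderiv : ∀ t, HasDerivAt (fun t ↦ -(1 / (2 * a)) * (exp (-a * t ^ 2) * erf t))
      (t * exp (-a * t ^ 2) * erf t - 1 / (a * √π) * exp (-(a + 1) * t ^ 2)) t := by
    intro t
    have hexp : HasDerivAt (fun t ↦ exp (-a * t ^ 2)) (exp (-a * t ^ 2) * (-a * (2 * t))) t := by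
      simpa using ((hasDerivAt_pow 2 t).const_mul (-a)).exp
    refine ((hexp.mul (hasDerivAt_erf t)).const_mul (-(1 / (2 * a)))).congr_deriv ?_
    have : exp (-(a + 1) * t ^ 2) = exp (-a * t ^ 2) * exp (-t ^ 2) := by
      rw [← exp_add]; ring_nf
    rw [this]
    field_simp
    ring
  have h0 := integral_eq_zero_of_hasDerivAt_of_integrable hderiv (hg.sub hh) hF
  rw [integral_sub hg hh, sub_eq_zero, integral_const_mul, integral_gaussian] at h0
  rw [h0, sqrt_div pi_pos.le]
  field_simp

lemma integral_intervalIntegral_swap_of_norm_le {E : Type*} [NormedAddCommGroup E]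
    [NormedSpace ℝ E] {f : ℝ → ℝ → E} {g : ℝ → ℝ} (hf : Continuous (uncurry f))
    (hg : Integrable g) (hfg : ∀ t s, ‖f t s‖ ≤ g t) (a b : ℝ) :
    ∫ t, ∫ s in a..b, f t s = ∫ s in a..b, ∫ t, f t s := by
  have : IsFiniteMeasure (volume.restrict (uIoc a b)) :=
    isFiniteMeasure_restrict.2 (by rw [uIoc]; exact measure_Ioc_lt_top.ne)
  refine (intervalIntegral_integral_swap ?_).symm
  exact (hg.comp_snd _).mono' (hf.comp continuous_swap).aestronglyMeasurable
    (Filter.Eventually.of_forall fun p ↦ hfg p.2 p.1)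

lemma exp_neg_sq_mul_owenT (t z w : ℝ) :
    exp (-t ^ 2) * owenT (t * z) w =
      1 / (2 * π) * ∫ s in (0:ℝ)..w, exp (-(1 + z ^ 2 * (1 + s ^ 2) / 2) * t ^ 2) / (1 + s ^ 2) := by
  rw [owenT, mul_left_comm, ← intervalIntegral.integral_const_mul]
  congr 1
  refine intervalIntegral.integral_congr fun s _ ↦ ?_
  rw [show -(1 + z ^ 2 * (1 + s ^ 2) / 2) * t ^ 2 = -t ^ 2 + -(t * z) ^ 2 * (1 + s ^ 2) / 2 by ring,
    exp_add]
  ring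

lemma integral_exp_neg_sq_mul_owenT (z w : ℝ) :
    ∫ t, exp (-t ^ 2) * owenT (t * z) w =
      1 / (2 * π) * ∫ s in (0:ℝ)..w, √(π / (1 + z ^ 2 * (1 + s ^ 2) / 2)) / (1 + s ^ 2) := by
  have hbound : ∀ t s : ℝ,
      ‖exp (-(1 + z ^ 2 * (1 + s ^ 2) / 2) * t ^ 2) / (1 + s ^ 2)‖ ≤ exp (-1 * t ^ 2) := by
    intro t s
    rw [norm_div, Real.norm_of_nonneg (exp_pos _).le, Real.norm_of_nonneg (by positivity)]
    refine div_le_of_le_mul₀ (by positivity) (exp_pos _).le ?_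
    calc exp (-(1 + z ^ 2 * (1 + s ^ 2) / 2) * t ^ 2) ≤ exp (-1 * t ^ 2) := by
          gcongr; nlinarith [sq_nonneg (z * t), sq_nonneg (z * s * t)]
      _ ≤ exp (-1 * t ^ 2) * (1 + s ^ 2) := le_mul_of_one_le_right (exp_pos _).le (by nlinarith)
  simp_rw [exp_neg_sq_mul_owenT, integral_const_mul]
  rw [integral_intervalIntegral_swap_of_norm_le (by fun_prop (disch := intro; positivity))
    (integrable_exp_neg_mul_sq one_pos) hbound]
  congr 1
  refine intervalIntegral.integral_congr fun s _ ↦ ?_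
  rw [integral_div, integral_gaussian]

lemma exp_mul_erf_mul_erf (t z w : ℝ) :
    exp (-t ^ 2 * z ^ 2 / 2) * erf t * erf (t * z * w / √2) =
      2 / √π * (z / √2) * ∫ s in (0:ℝ)..w, t * exp (-(z ^ 2 * (1 + s ^ 2) / 2) * t ^ 2) * erf t := by
  have h2 : √2 ^ 2 = 2 := sq_sqrt zero_le_two
  rw [show t * z * w / √2 = t * z / √2 * w by ring, erf_mul, ← intervalIntegral.integral_const_mul,
    ← intervalIntegral.integral_const_mul, ← intervalIntegral.integral_const_mul]
  refine intervalIntegral.integral_congr fun s _ ↦ ?_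
  rw [show -(z ^ 2 * (1 + s ^ 2) / 2) * t ^ 2 = -t ^ 2 * z ^ 2 / 2 + -(t * z / √2 * s) ^ 2 by
    rw [mul_pow, div_pow, h2]; ring, exp_add]
  ring

lemma integral_exp_mul_erf_mul_erf {z : ℝ} (hz : z ≠ 0) (w : ℝ) :
    ∫ t, exp (-t ^ 2 * z ^ 2 / 2) * erf t * erf (t * z * w / √2) =
      2 / √π * (z / √2) *
        ∫ s in (0:ℝ)..w, 1 / (z ^ 2 * (1 + s ^ 2) / 2 * √(z ^ 2 * (1 + s ^ 2) / 2 + 1)) := by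
  have hz2 : 0 < z ^ 2 / 2 := by positivity
  have hbound : ∀ t s : ℝ, ‖t * exp (-(z ^ 2 * (1 + s ^ 2) / 2) * t ^ 2) * erf t‖ ≤
      ‖t * exp (-(z ^ 2 / 2) * t ^ 2)‖ := by
    intro t s
    rw [norm_mul, norm_mul, norm_mul]
    refine (mul_le_of_le_one_right (by positivity) (abs_erf_le_one t)).trans ?_
    gcongr
    rw [Real.norm_of_nonneg (exp_pos _).le, Real.norm_of_nonneg (exp_pos _).le]
    gcongr
    nlinarith [sq_nonneg (z * s * t)]
  simp_rw [exp_mul_erf_mul_erf, integral_const_mul]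
  rw [integral_intervalIntegral_swap_of_norm_le (by fun_prop)
    (integrable_mul_exp_neg_mul_sq hz2).norm hbound]
  congr 1
  exact intervalIntegral.integral_congr fun s _ ↦
    integral_mul_exp_neg_mul_sq_mul_erf (by positivity)

theorem owenT_integral_by_parts (z w : ℝ) (hz : 0 < z) :
    (1 / Real.sqrt π) * ∫ t : ℝ, Real.exp (-t^2) * owenT (t * z) w =
      (z / (4 * Real.sqrt (2*π))) *
        ∫ t : ℝ, Real.exp (-t^2 * z^2 / 2) * erf t * erf (t * z * w / Real.sqrt 2) := by
  rw [integral_exp_neg_sq_mul_owenT, integral_exp_mul_erf_mul_erf hz.ne',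
    ← mul_assoc, ← mul_assoc, ← intervalIntegral.integral_const_mul,
    ← intervalIntegral.integral_const_mul]
  refine intervalIntegral.integral_congr fun s _ ↦ ?_
  rw [sqrt_div pi_pos.le, sqrt_mul zero_le_two, add_comm (z ^ 2 * _ / 2) 1]
  field_simp
  rw [sq_sqrt pi_pos.le, sq_sqrt zero_le_two]
  ring
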